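/- Let m ∈ ℕ and let R_m be a family of rational maps each of degree at most m, and D a domain in ℂ∞. Suppose there exists a set A = {u, v, w} of three distinct points of ℂ∞ such that every point z₀ ∈ D has a neighbourhood in which each R ∈ R_m omits at least two of the values in A. Then R_m is normal in D. -/

import Mathlib

open Filter Topology OnePoint Metric
open scoped Classical

noncomputable def chord : OnePoint ℂ → OnePoint ℂ → ℝ := fun x y =>
  Option.elim (α := ℂ) x
    (Option.elim (α := ℂ) y 0 (fun b => 2 / Real.sqrt (1 + ‖b‖ ^ 2)))
    (fun a =>
      Option.elim (α := ℂ) y (2 / Real.sqrt (1 + ‖a‖ ^ 2))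
        (fun b => 2 * ‖a - b‖ / Real.sqrt ((1 + ‖a‖ ^ 2) * (1 + ‖b‖ ^ 2))))

/-- spherical (arclength) metric on the Riemann sphere, diameter π -/
noncomputable def sph (x y : OnePoint ℂ) : ℝ := 2 * Real.arcsin (chord x y / 2)

/-- value of a meromorphic function as a point of the Riemann sphere -/
noncomputable def sphVal (f : ℂ → ℂ) (z : ℂ) : OnePoint ℂ :=
  if Tendsto (fun w => ‖f w‖) (𝓝[≠] z) atTop then ∞
  else (((limUnder (𝓝[≠] z) f : ℂ) : OnePoint ℂ))

def IsMeroSphere (D : Set ℂ) (A : ℂ → OnePoint ℂ) : Prop :=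
  ∃ a : ℂ → ℂ, MeromorphicOn a D ∧ ∀ z ∈ D, A z = sphVal a z

def IsMeroSphereOrInf (D : Set ℂ) (A : ℂ → OnePoint ℂ) : Prop :=
  IsMeroSphere D A ∨ ∀ z ∈ D, A z = ∞

/-- Normality: every sequence has a subsequence converging locally uniformly (spherically)
to a meromorphic function or to ∞. -/
def NormalOn (D : Set ℂ) (F : Set (ℂ → ℂ)) : Prop :=
  ∀ f : ℕ → ℂ → ℂ, (∀ n, f n ∈ F) →
    ∃ φ : ℕ → ℕ, StrictMono φ ∧ ∃ G : ℂ → OnePoint ℂ,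
      IsMeroSphereOrInf D G ∧
      ∀ K : Set ℂ, K ⊆ D → IsCompact K → ∀ ε : ℝ, 0 < ε →
        ∀ᶠ n in atTop, ∀ z ∈ K, sph (sphVal (f (φ n)) z) (G z) < ε

/-- rational map of degree at most m -/
def IsRatDegLE (m : ℕ) (R : ℂ → ℂ) : Prop :=
  ∃ p q : Polynomial ℂ, q ≠ 0 ∧ p.degree ≤ (m : ℕ) ∧ q.degree ≤ (m : ℕ) ∧
    ∀ z : ℂ, R z = p.eval z / q.eval z



-- basic lemmas
lemma sphVal_congr {f g : ℂ → ℂ} {z : ℂ} (h : f =ᶠ[𝓝[≠] z] g) : sphVal f z = sphVal g z := by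
  have h1 : Tendsto (fun w => ‖f w‖) (𝓝[≠] z) atTop ↔ Tendsto (fun w => ‖g w‖) (𝓝[≠] z) atTop := by
    have hnorm : (fun w => ‖f w‖) =ᶠ[𝓝[≠] z] (fun w => ‖g w‖) := h.mono fun x hx => by simp only []; rw [hx]
    exact ⟨fun ht => ht.congr' hnorm, fun ht => ht.congr' hnorm.symm⟩
  unfold sphVal
  rw [limUnder, limUnder, Filter.map_congr h]
  by_cases hc : Tendsto (fun w => ‖f w‖) (𝓝[≠] z) atTop
  · rw [if_pos hc, if_pos (h1.mp hc)]
  · rw [if_neg hc, if_neg (fun hg => hc (h1.mpr hg))]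

lemma sphVal_of_tendsto {f : ℂ → ℂ} {z : ℂ} {L : ℂ} (h : Tendsto f (𝓝[≠] z) (𝓝 L)) :
    sphVal f z = (L : OnePoint ℂ) := by
  have hn : ¬ Tendsto (fun w => ‖f w‖) (𝓝[≠] z) atTop := by
    intro ht
    have h1 : ∀ᶠ w in 𝓝[≠] z, ‖f w‖ < ‖L‖ + 1 :=
      (h.norm).eventually ((tendsto_id.eventually_lt_const (by linarith)))
    have h2 : ∀ᶠ w in 𝓝[≠] z, ‖L‖ + 1 ≤ ‖f w‖ := ht.eventually_ge_atTop _
    obtain ⟨x, hx1, hx2⟩ := (h1.and h2).exists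
    linarith
  rw [sphVal, if_neg hn, h.limUnder_eq]

lemma eventually_notin_finite {S : Set ℂ} (hS : S.Finite) (z : ℂ) : ∀ᶠ w in 𝓝[≠] z, w ∉ S := by
  have hcl : IsClosed (S \ {z}) := (hS.subset Set.diff_subset).isClosed
  have h1 : ∀ᶠ w in 𝓝 z, w ∉ S \ {z} :=
    hcl.isOpen_compl.eventually_mem (by simp)
  filter_upwards [eventually_nhdsWithin_of_eventually_nhds h1, self_mem_nhdsWithin] with w hw1 hw2
  intro hw
  exact hw1 ⟨hw, hw2⟩

lemma sphVal_rat_fin {p q : Polynomial ℂ} {f : ℂ → ℂ} {z : ℂ}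
    (hf : f =ᶠ[𝓝[≠] z] fun w => p.eval w / q.eval w) (hq : q.eval z ≠ 0) :
    sphVal f z = ((p.eval z / q.eval z : ℂ) : OnePoint ℂ) := by
  rw [sphVal_congr hf]
  apply sphVal_of_tendsto
  have hc : ContinuousAt (fun w => p.eval w / q.eval w) z :=
    (p.continuous.continuousAt).div (q.continuous.continuousAt) hq
  exact hc.continuousWithinAt.tendsto

lemma sphVal_rat_inf {p q : Polynomial ℂ} {f : ℂ → ℂ} {z : ℂ}
    (hf : f =ᶠ[𝓝[≠] z] fun w => p.eval w / q.eval w) (hq0 : q ≠ 0)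
    (hqz : q.eval z = 0) (hpz : p.eval z ≠ 0) :
    sphVal f z = ∞ := by
  rw [sphVal_congr hf, sphVal, if_pos]
  have h1 : Tendsto (fun w => ‖p.eval w‖) (𝓝[≠] z) (𝓝 ‖p.eval z‖) :=
    ((p.continuous.norm).continuousAt.continuousWithinAt.tendsto)
  have h2 : Tendsto (fun w => ‖q.eval w‖⁻¹) (𝓝[≠] z) atTop := by
    apply tendsto_inv_nhdsGT_zero.comp
    rw [tendsto_nhdsWithin_iff]
    constructor
    · have := (q.continuous.norm).continuousAt.continuousWithinAt.tendsto
        (s := {z}ᶜ) (x := z)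
      rwa [hqz, norm_zero] at this
    · filter_upwards [eventually_notin_finite (Polynomial.finite_setOf_isRoot hq0) z] with w hw
      simpa [Set.mem_Ioi, norm_pos_iff] using hw
  have h3 := h1.pos_mul_atTop (norm_pos_iff.mpr hpz) h2
  refine h3.congr fun w => ?_
  rw [norm_div, div_eq_mul_inv]

lemma chord_inf_inf : chord ∞ ∞ = 0 := rfl
lemma chord_inf_coe (b : ℂ) : chord ∞ (b : OnePoint ℂ) = 2 / Real.sqrt (1 + ‖b‖ ^ 2) := rfl
lemma chord_coe_inf (a : ℂ) : chord (a : OnePoint ℂ) ∞ = 2 / Real.sqrt (1 + ‖a‖ ^ 2) := rfl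
lemma chord_coe_coe (a b : ℂ) :
    chord (a : OnePoint ℂ) (b : OnePoint ℂ)
      = 2 * ‖a - b‖ / Real.sqrt ((1 + ‖a‖ ^ 2) * (1 + ‖b‖ ^ 2)) := rfl

lemma one_add_div_sq (a b : ℂ) (hb : b ≠ 0) :
    1 + ‖a / b‖ ^ 2 = (‖a‖ ^ 2 + ‖b‖ ^ 2) / ‖b‖ ^ 2 := by
  have hb' : ‖b‖ ≠ 0 := norm_ne_zero_iff.mpr hb
  rw [eq_div_iff (pow_ne_zero 2 hb'), norm_div, div_pow, add_mul, one_mul,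
    div_mul_cancel₀ _ (pow_ne_zero 2 hb'), add_comm]

lemma chord_eq (a b A B : ℂ) (h1 : ¬(a = 0 ∧ b = 0)) (h2 : ¬(A = 0 ∧ B = 0)) :
    chord (if b = 0 then ∞ else ((a / b : ℂ) : OnePoint ℂ))
        (if B = 0 then ∞ else ((A / B : ℂ) : OnePoint ℂ))
      = 2 * ‖a * B - b * A‖ / Real.sqrt ((‖a‖ ^ 2 + ‖b‖ ^ 2) * (‖A‖ ^ 2 + ‖B‖ ^ 2)) := by
  by_cases hb : b = 0 <;> by_cases hB : B = 0
  · subst hb; subst hB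
    rw [if_pos rfl, if_pos rfl, chord_inf_inf, mul_zero, zero_mul, sub_zero, norm_zero,
      mul_zero, zero_div]
  · -- b = 0, a ≠ 0, B ≠ 0
    subst hb
    have ha : a ≠ 0 := fun h => h1 ⟨h, rfl⟩
    have ha' : (0:ℝ) < ‖a‖ := norm_pos_iff.mpr ha
    rw [if_pos rfl, if_neg hB, chord_inf_coe, one_add_div_sq A B hB, zero_mul, sub_zero,
      norm_mul, norm_zero, zero_pow (two_ne_zero), add_zero,
      Real.sqrt_div' _ (sq_nonneg ‖B‖), Real.sqrt_sq (norm_nonneg B),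
      Real.sqrt_mul (sq_nonneg ‖a‖), Real.sqrt_sq (norm_nonneg a),
      div_div_eq_mul_div,
      show (2:ℝ) * (‖a‖ * ‖B‖) = ‖a‖ * (2 * ‖B‖) by ring,
      show ‖a‖ * Real.sqrt (‖A‖ ^ 2 + ‖B‖ ^ 2) = ‖a‖ * Real.sqrt (‖A‖ ^ 2 + ‖B‖ ^ 2) from rfl,
      mul_div_mul_left _ _ (ne_of_gt ha')]
  · -- b ≠ 0, B = 0, A ≠ 0
    subst hB
    have hA : A ≠ 0 := fun h => h2 ⟨h, rfl⟩
    have hA' : (0:ℝ) < ‖A‖ := norm_pos_iff.mpr hA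
    rw [if_neg hb, if_pos rfl, chord_coe_inf, one_add_div_sq a b hb, mul_zero, zero_sub,
      norm_neg, norm_mul, norm_zero, zero_pow (two_ne_zero), add_zero,
      Real.sqrt_div' _ (sq_nonneg ‖b‖), Real.sqrt_sq (norm_nonneg b),
      Real.sqrt_mul' _ (sq_nonneg ‖A‖), Real.sqrt_sq (norm_nonneg A),
      div_div_eq_mul_div,
      show (2:ℝ) * (‖b‖ * ‖A‖) = (2 * ‖b‖) * ‖A‖ by ring,
      mul_div_mul_right _ _ (ne_of_gt hA')]
  · -- b ≠ 0, B ≠ 0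
    have hb' : (0:ℝ) < ‖b‖ := norm_pos_iff.mpr hb
    have hB' : (0:ℝ) < ‖B‖ := norm_pos_iff.mpr hB
    rw [if_neg hb, if_neg hB, chord_coe_coe, one_add_div_sq a b hb, one_add_div_sq A B hB]
    have hdiff : a / b - A / B = (a * B - b * A) / (b * B) := by
      field_simp
    rw [hdiff, norm_div, norm_mul, div_mul_div_comm, ← mul_pow,
      Real.sqrt_div (by positivity) _, Real.sqrt_sq (by positivity),
      mul_div_assoc' 2 _ _, div_div_div_cancel_right₀ (by positivity)]

lemma sph_lt_of_chord_lt {x y : OnePoint ℂ} {ε : ℝ} (hε : 0 < ε)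
    (h0 : 0 ≤ chord x y)
    (h : chord x y < 2 * Real.sin (min (ε / 2) (Real.pi / 4))) : sph x y < ε := by
  set ε' := min (ε / 2) (Real.pi / 4) with hε'def
  have hπ := Real.pi_pos
  have hε'pos : 0 < ε' := lt_min (by linarith) (by linarith)
  have hε'le : ε' ≤ Real.pi / 2 := le_trans (min_le_right _ _) (by linarith)
  have hsin1 : Real.sin ε' ≤ 1 := Real.sin_le_one _
  have hch2 : chord x y / 2 < Real.sin ε' := by linarith
  have harc : Real.arcsin (chord x y / 2) < Real.arcsin (Real.sin ε') := by
    apply Real.strictMonoOn_arcsin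
    · constructor <;> [linarith; linarith]
    · have := Real.sin_pos_of_pos_of_lt_pi hε'pos (by linarith)
      constructor <;> [linarith; linarith]
    · exact hch2
  rw [Real.arcsin_sin (by linarith) hε'le] at harc
  have hd : sph x y = 2 * Real.arcsin (chord x y / 2) := rfl
  rw [hd]
  have : ε' ≤ ε / 2 := min_le_left _ _
  linarith

lemma chord_nonneg (x y : OnePoint ℂ) : 0 ≤ chord x y := by
  rcases x with _ | a <;> rcases y with _ | b
  · exact le_refl 0
  · show 0 ≤ chord ∞ (b : OnePoint ℂ); rw [chord_inf_coe]; positivity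
  · show 0 ≤ chord (a : OnePoint ℂ) ∞; rw [chord_coe_inf]; positivity
  · show 0 ≤ chord (a : OnePoint ℂ) (b : OnePoint ℂ); rw [chord_coe_coe]; positivity

lemma poly_exists_zero {g : Polynomial ℂ} {z₀ : ℂ} {ρ ε : ℝ} (hρ : 0 < ρ) (hε : 0 < ε)
    (hlo : ‖g.eval z₀‖ < ε) (hhi : ∀ z ∈ sphere z₀ ρ, ε ≤ ‖g.eval z‖) :
    ∃ β ∈ closedBall z₀ ρ, g.eval β = 0 := by
  by_contra hno
  push_neg at hno
  have key := Complex.norm_le_of_forall_mem_frontier_norm_le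
    (f := fun w => (g.eval w)⁻¹) (U := ball z₀ ρ) (C := ε⁻¹) isBounded_ball
    (by
      apply DifferentiableOn.diffContOnCl
      rw [closure_ball z₀ (ne_of_gt hρ)]
      exact (g.differentiable.differentiableOn).inv (fun z hz => hno z hz))
    (by
      intro z hz
      rw [frontier_ball z₀ (ne_of_gt hρ)] at hz
      simp only [norm_inv]
      exact inv_anti₀ hε (hhi z hz))
    (z := z₀)
    (by rw [closure_ball z₀ (ne_of_gt hρ)]; exact mem_closedBall_self (le_of_lt hρ))
  simp only [norm_inv] at key
  have hgz : g.eval z₀ ≠ 0 := hno z₀ (mem_closedBall_self (le_of_lt hρ))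
  have h1 : 0 < ‖g.eval z₀‖ := norm_pos_iff.mpr hgz
  have : ε ≤ ‖g.eval z₀‖ := by
    by_contra hcon
    push_neg at hcon
    have := inv_strictAnti₀ h1 hcon
    linarith
  linarith

lemma sum_pow_bound {k : ℕ} (d : Fin k → ℂ) {R : ℝ} (hR : 1 ≤ R) {z : ℂ} (hz : ‖z‖ ≤ R) :
    ‖∑ i : Fin k, d i * z ^ (i : ℕ)‖ ≤ (∑ i : Fin k, ‖d i‖) * R ^ k := by
  refine (norm_sum_le _ _).trans ?_
  rw [Finset.sum_mul]
  apply Finset.sum_le_sum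
  intro i _
  rw [norm_mul, norm_pow]
  have h1 : ‖z‖ ^ (i : ℕ) ≤ R ^ (i : ℕ) := pow_le_pow_left₀ (norm_nonneg z) hz _
  have h2 : R ^ (i : ℕ) ≤ R ^ k := pow_le_pow_right₀ hR (le_of_lt i.isLt)
  have h3 := norm_nonneg (d i)
  nlinarith [pow_nonneg (norm_nonneg z) (i : ℕ), pow_nonneg (le_trans zero_le_one hR) (i : ℕ)]

lemma exists_good_rep (m : ℕ) (R : ℂ → ℂ)
    (h : ∃ p q : Polynomial ℂ, q ≠ 0 ∧ p.degree ≤ (m : ℕ) ∧ q.degree ≤ (m : ℕ) ∧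
      ∀ z : ℂ, R z = p.eval z / q.eval z) :
    ∃ p q : Polynomial ℂ, q ≠ 0 ∧ p.natDegree ≤ m ∧ q.natDegree ≤ m ∧
      (∀ z, ¬(p.eval z = 0 ∧ q.eval z = 0)) ∧
      (∃ S : Set ℂ, S.Finite ∧ ∀ w ∉ S, R w = p.eval w / q.eval w) ∧
      ‖(fun i : Fin (m+1) => (p.coeff i, q.coeff i))‖ = 1 := by
  obtain ⟨p₀, q₀, hq₀, hdp₀, hdq₀, hrep⟩ := h
  set g := GCDMonoid.gcd p₀ q₀ with hgdef
  have hg : g ≠ 0 := gcd_ne_zero_of_right hq₀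
  set p₁ := p₀ / g with hp₁def
  set q₁ := q₀ / g with hq₁def
  have hcop : IsCoprime p₁ q₁ := isCoprime_div_gcd_div_gcd hq₀
  have hp₀eq : g * p₁ = p₀ := EuclideanDomain.mul_div_cancel' hg (gcd_dvd_left p₀ q₀)
  have hq₀eq : g * q₁ = q₀ := EuclideanDomain.mul_div_cancel' hg (gcd_dvd_right p₀ q₀)
  have hq₁ : q₁ ≠ 0 := right_div_gcd_ne_zero hq₀
  have hdp₁ : p₁.natDegree ≤ m :=
    Polynomial.natDegree_le_iff_degree_le.mpr (le_trans (Polynomial.degree_div_le p₀ g) hdp₀)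
  have hdq₁ : q₁.natDegree ≤ m :=
    Polynomial.natDegree_le_iff_degree_le.mpr (le_trans (Polynomial.degree_div_le q₀ g) hdq₀)
  have hnocomm : ∀ z, ¬(p₁.eval z = 0 ∧ q₁.eval z = 0) := by
    rintro z ⟨h1, h2⟩
    obtain ⟨a, b, hab⟩ := hcop
    have := congrArg (Polynomial.eval z) hab
    simp only [Polynomial.eval_add, Polynomial.eval_mul, Polynomial.eval_one, h1, h2,
      mul_zero] at this
    rw [add_zero] at this
    exact one_ne_zero this.symm
  have hrep₁ : ∀ w, g.eval w ≠ 0 → R w = p₁.eval w / q₁.eval w := by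
    intro w hw
    rw [hrep w, ← hp₀eq, ← hq₀eq, Polynomial.eval_mul, Polynomial.eval_mul,
      mul_div_mul_left _ _ hw]
  -- normalization
  set vec₁ : Fin (m+1) → ℂ × ℂ := fun i => (p₁.coeff i, q₁.coeff i) with hvec₁def
  have hvecne : vec₁ ≠ 0 := by
    intro h0
    have hj : q₁.natDegree < m + 1 := Nat.lt_succ_of_le hdq₁
    have := congrFun h0 ⟨q₁.natDegree, hj⟩
    have h2 : q₁.coeff q₁.natDegree = 0 := congrArg Prod.snd this
    exact (mt Polynomial.leadingCoeff_eq_zero.mp hq₁) h2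
  have hc : (0:ℝ) < ‖vec₁‖ := norm_pos_iff.mpr hvecne
  set t : ℂ := (‖vec₁‖ : ℂ) with htdef
  have ht : t ≠ 0 := by
    simp only [htdef, ne_eq, Complex.ofReal_eq_zero]
    exact ne_of_gt hc
  have hti : t⁻¹ ≠ 0 := inv_ne_zero ht
  refine ⟨Polynomial.C t⁻¹ * p₁, Polynomial.C t⁻¹ * q₁, ?_, ?_, ?_, ?_, ?_, ?_⟩
  · exact mul_ne_zero (fun hC => hti (Polynomial.C_eq_zero.mp hC)) hq₁
  · exact le_trans (Polynomial.natDegree_C_mul_le _ _) hdp₁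
  · exact le_trans (Polynomial.natDegree_C_mul_le _ _) hdq₁
  · intro z hz
    rw [Polynomial.eval_mul, Polynomial.eval_mul, Polynomial.eval_C, mul_eq_zero,
      mul_eq_zero] at hz
    exact hnocomm z ⟨hz.1.resolve_left hti, hz.2.resolve_left hti⟩
  · refine ⟨{w | g.eval w = 0}, Polynomial.finite_setOf_isRoot hg, fun w hw => ?_⟩
    rw [Polynomial.eval_mul, Polynomial.eval_mul, Polynomial.eval_C,
      mul_div_mul_left _ _ hti]
    exact hrep₁ w hw
  · have hvec : (fun i : Fin (m+1) =>
        ((Polynomial.C t⁻¹ * p₁).coeff i, (Polynomial.C t⁻¹ * q₁).coeff i)) = t⁻¹ • vec₁ := by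
      funext i
      simp only [Polynomial.coeff_C_mul, hvec₁def, Pi.smul_apply, Prod.smul_mk, smul_eq_mul]
    rw [hvec, norm_smul, norm_inv, htdef, Complex.norm_real, Real.norm_eq_abs, abs_of_pos hc, inv_mul_cancel₀ (ne_of_gt hc)]

noncomputable def polyOf {m : ℕ} (c : Fin (m+1) → ℂ) : Polynomial ℂ :=
  ∑ i : Fin (m+1), Polynomial.C (c i) * Polynomial.X ^ (i : ℕ)

lemma polyOf_coeff {m : ℕ} (c : Fin (m+1) → ℂ) (j : Fin (m+1)) :
    (polyOf c).coeff (j : ℕ) = c j := by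
  rw [polyOf, Polynomial.finset_sum_coeff]
  have : ∀ i : Fin (m+1), (Polynomial.C (c i) * Polynomial.X ^ (i:ℕ)).coeff (j:ℕ)
      = if i = j then c i else 0 := by
    intro i
    rw [Polynomial.coeff_C_mul, Polynomial.coeff_X_pow]
    by_cases h : i = j
    · subst h; simp
    · rw [if_neg h, if_neg (fun hc => h (Fin.ext hc.symm)), mul_zero]
  rw [Finset.sum_congr rfl (fun i _ => this i), Finset.sum_ite_eq' _ j, if_pos (Finset.mem_univ j)]

lemma polyOf_eval {m : ℕ} (c : Fin (m+1) → ℂ) (z : ℂ) :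
    (polyOf c).eval z = ∑ i : Fin (m+1), c i * z ^ (i : ℕ) := by
  rw [polyOf, Polynomial.eval_finset_sum]
  congr 1
  funext i
  rw [Polynomial.eval_mul, Polynomial.eval_C, Polynomial.eval_pow, Polynomial.eval_X]

lemma eval_fin_sum {m : ℕ} (p : Polynomial ℂ) (hp : p.natDegree ≤ m) (z : ℂ) :
    p.eval z = ∑ i : Fin (m+1), p.coeff (i : ℕ) * z ^ (i : ℕ) := by
  rw [Polynomial.eval_eq_sum_range' (Nat.lt_succ_of_le hp) z, ← Fin.sum_univ_eq_sum_range]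


lemma polyOf_coeff_eq_zero {m : ℕ} (c : Fin (m+1) → ℂ) {N : ℕ} (hN : m < N) :
    (polyOf c).coeff N = 0 := by
  rw [polyOf, Polynomial.finset_sum_coeff]
  apply Finset.sum_eq_zero
  intro i _
  rw [Polynomial.coeff_C_mul, Polynomial.coeff_X_pow, if_neg, mul_zero]
  intro h
  have := i.isLt
  omega

lemma polyOf_natDegree_le {m : ℕ} (c : Fin (m+1) → ℂ) : (polyOf c).natDegree ≤ m :=
  Polynomial.natDegree_le_iff_coeff_eq_zero.mpr (fun N hN => polyOf_coeff_eq_zero c hN)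

noncomputable def Gfun (P Q : Polynomial ℂ) : ℂ → OnePoint ℂ := fun z =>
  if Q.eval z = 0 then ∞ else (((P.eval z / Q.eval z : ℂ) : OnePoint ℂ))
lemma Gfun_apply (P Q : Polynomial ℂ) (z : ℂ) :
    Gfun P Q z = if Q.eval z = 0 then ∞ else (((P.eval z / Q.eval z : ℂ) : OnePoint ℂ)) := rfl

noncomputable def hpoly (a : OnePoint ℂ) (pp qq : Polynomial ℂ) : Polynomial ℂ :=
  Option.elim (α := ℂ) a qq (fun c => pp - Polynomial.C c * qq)

noncomputable def cfac (a : OnePoint ℂ) : ℝ := Option.elim (α := ℂ) a 1 (fun c => 1 + ‖c‖)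

lemma cfac_pos (a : OnePoint ℂ) : 0 < cfac a := by
  rcases a with _ | c
  · exact one_pos
  · show (0:ℝ) < 1 + ‖c‖; positivity

lemma hpoly_eval_bound (a : OnePoint ℂ) (pp qq PP QQ : Polynomial ℂ) (z : ℂ) (δ : ℝ)
    (h1 : ‖pp.eval z - PP.eval z‖ ≤ δ) (h2 : ‖qq.eval z - QQ.eval z‖ ≤ δ) :
    ‖(hpoly a pp qq).eval z - (hpoly a PP QQ).eval z‖ ≤ cfac a * δ := by
  have hδ : 0 ≤ δ := le_trans (norm_nonneg _) h1
  rcases a with _ | c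
  · show ‖qq.eval z - QQ.eval z‖ ≤ 1 * δ
    rw [one_mul]; exact h2
  · show ‖(pp - Polynomial.C c * qq).eval z - (PP - Polynomial.C c * QQ).eval z‖ ≤ (1 + ‖c‖) * δ
    have he : (pp - Polynomial.C c * qq).eval z - (PP - Polynomial.C c * QQ).eval z
        = (pp.eval z - PP.eval z) - c * (qq.eval z - QQ.eval z) := by
      simp only [Polynomial.eval_sub, Polynomial.eval_mul, Polynomial.eval_C]
      ring
    rw [he]
    refine le_trans (norm_sub_le _ _) ?_
    rw [norm_mul]
    have : ‖c‖ * ‖qq.eval z - QQ.eval z‖ ≤ ‖c‖ * δ :=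
      mul_le_mul_of_nonneg_left h2 (norm_nonneg c)
    nlinarith [norm_nonneg c]



theorem rational_three_values_normal
    (m : ℕ) (D : Set ℂ) (hD : IsOpen D) (hDc : IsPreconnected D)
    (F : Set (ℂ → ℂ)) (hF : ∀ R ∈ F, IsRatDegLE m R)
    (u v w : OnePoint ℂ) (huv : u ≠ v) (hvw : v ≠ w) (huw : u ≠ w)
    (hloc : ∀ z₀ ∈ D, ∃ r : ℝ, 0 < r ∧ Metric.ball z₀ r ⊆ D ∧
      ∀ R ∈ F,
        ((∀ z ∈ Metric.ball z₀ r, sphVal R z ≠ u) ∧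
         (∀ z ∈ Metric.ball z₀ r, sphVal R z ≠ v)) ∨
        ((∀ z ∈ Metric.ball z₀ r, sphVal R z ≠ v) ∧
         (∀ z ∈ Metric.ball z₀ r, sphVal R z ≠ w)) ∨
        ((∀ z ∈ Metric.ball z₀ r, sphVal R z ≠ u) ∧
         (∀ z ∈ Metric.ball z₀ r, sphVal R z ≠ w))) :
    NormalOn D F := by
  intro f hfF
  have hrep : ∀ n, ∃ p q : Polynomial ℂ, q ≠ 0 ∧ p.natDegree ≤ m ∧ q.natDegree ≤ m ∧
      (∀ z, ¬(p.eval z = 0 ∧ q.eval z = 0)) ∧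
      (∃ S : Set ℂ, S.Finite ∧ ∀ w ∉ S, f n w = p.eval w / q.eval w) ∧
      ‖(fun i : Fin (m+1) => (p.coeff i, q.coeff i))‖ = 1 :=
    fun n => exists_good_rep m (f n) (hF (f n) (hfF n))
  choose p q hq hdp hdq hnc hSex hnorm using hrep
  choose S hSfin hSrep using hSex
  have heq : ∀ (n : ℕ) (z : ℂ), f n =ᶠ[𝓝[≠] z] fun w => (p n).eval w / (q n).eval w := by
    intro n z
    filter_upwards [eventually_notin_finite (hSfin n) z] with w hw
    exact hSrep n w hw
  set x : ℕ → (Fin (m+1) → ℂ × ℂ) := fun n i => ((p n).coeff i, (q n).coeff i) with hxdef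
  have hxmem : ∀ n, x n ∈ Metric.sphere (0 : Fin (m+1) → ℂ × ℂ) 1 := by
    intro n
    rw [mem_sphere_zero_iff_norm]
    exact hnorm n
  obtain ⟨L, hLmem, φ, hφ, hconv⟩ :=
    (isCompact_sphere (0 : Fin (m+1) → ℂ × ℂ) 1).tendsto_subseq hxmem
  have hL : ‖L‖ = 1 := mem_sphere_zero_iff_norm.mp hLmem
  refine ⟨φ, hφ, ?_⟩
  set P : Polynomial ℂ := polyOf (fun i => (L i).1) with hPdef
  set Q : Polynomial ℂ := polyOf (fun i => (L i).2) with hQdef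
  have hPQ0 : ¬(P = 0 ∧ Q = 0) := by
    rintro ⟨hP, hQ⟩
    have hL0 : L = 0 := by
      funext i
      have h1 : (L i).1 = 0 := by
        rw [← polyOf_coeff (fun i => (L i).1) i, ← hPdef, hP, Polynomial.coeff_zero]
      have h2 : (L i).2 = 0 := by
        rw [← polyOf_coeff (fun i => (L i).2) i, ← hQdef, hQ, Polynomial.coeff_zero]
      exact Prod.ext h1 h2
    rw [hL0, norm_zero] at hL
    exact one_ne_zero hL.symm
  -- coefficientwise convergence
  have hcoef : ∀ i : Fin (m+1), Tendsto (fun n => x (φ n) i) atTop (𝓝 (L i)) :=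
    tendsto_pi_nhds.mp hconv
  -- uniform convergence on bounded sets
  have huconv : ∀ R : ℝ, 1 ≤ R → ∀ δ : ℝ, 0 < δ → ∀ᶠ n in atTop, ∀ z : ℂ, ‖z‖ ≤ R →
      ‖(p (φ n)).eval z - P.eval z‖ ≤ δ ∧ ‖(q (φ n)).eval z - Q.eval z‖ ≤ δ := by
    intro R hR δ hδ
    have hpow : (0:ℝ) < R ^ (m+1) := pow_pos (lt_of_lt_of_le one_pos hR) _
    have hsum : Tendsto (fun n => ∑ i : Fin (m+1),
        (‖(x (φ n) i).1 - (L i).1‖ + ‖(x (φ n) i).2 - (L i).2‖)) atTop (𝓝 0) := by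
      have hterm : ∀ i : Fin (m+1), Tendsto
          (fun n => ‖(x (φ n) i).1 - (L i).1‖ + ‖(x (φ n) i).2 - (L i).2‖) atTop (𝓝 0) := by
        intro i
        have h1 : Tendsto (fun n => (x (φ n) i).1) atTop (𝓝 (L i).1) :=
          (continuous_fst.tendsto _).comp (hcoef i)
        have h2 : Tendsto (fun n => (x (φ n) i).2) atTop (𝓝 (L i).2) :=
          (continuous_snd.tendsto _).comp (hcoef i)
        have h1' : Tendsto (fun n => ‖(x (φ n) i).1 - (L i).1‖) atTop (𝓝 0) := by
          have h3 := tendsto_sub_nhds_zero_iff.mpr h1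
          simpa using h3.norm
        have h2' : Tendsto (fun n => ‖(x (φ n) i).2 - (L i).2‖) atTop (𝓝 0) := by
          have h3 := tendsto_sub_nhds_zero_iff.mpr h2
          simpa using h3.norm
        simpa using h1'.add h2'
      have h4 := tendsto_finset_sum Finset.univ (fun i _ => hterm i)
      simpa using h4
    have hev : ∀ᶠ n in atTop, (∑ i : Fin (m+1),
        (‖(x (φ n) i).1 - (L i).1‖ + ‖(x (φ n) i).2 - (L i).2‖)) < δ / R ^ (m+1) := by
      have := hsum.eventually_lt_const (show (0:ℝ) < δ / R ^ (m+1) by positivity)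
      exact this
    filter_upwards [hev] with n hn
    intro z hz
    have hkey : ∀ (r1 r2 : Polynomial ℂ), r1.natDegree ≤ m →
        (∀ i : Fin (m+1), ‖r1.coeff (i:ℕ) - r2.coeff (i:ℕ)‖
          ≤ ‖(x (φ n) i).1 - (L i).1‖ + ‖(x (φ n) i).2 - (L i).2‖) →
        r2.natDegree ≤ m → ‖r1.eval z - r2.eval z‖ ≤ δ := by
      intro r1 r2 hd1 hcb hd2
      have e1 : r1.eval z - r2.eval z
          = ∑ i : Fin (m+1), (r1.coeff (i:ℕ) - r2.coeff (i:ℕ)) * z ^ (i:ℕ) := by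
        rw [eval_fin_sum r1 hd1 z, eval_fin_sum r2 hd2 z, ← Finset.sum_sub_distrib]
        congr 1
        funext i
        ring
      rw [e1]
      refine le_trans (sum_pow_bound _ hR hz) ?_
      have h5 : (∑ i : Fin (m+1), ‖r1.coeff (i:ℕ) - r2.coeff (i:ℕ)‖)
          ≤ ∑ i : Fin (m+1), (‖(x (φ n) i).1 - (L i).1‖ + ‖(x (φ n) i).2 - (L i).2‖) :=
        Finset.sum_le_sum (fun i _ => hcb i)
      have h6 := le_of_lt (lt_of_le_of_lt h5 hn)
      calc (∑ i : Fin (m+1), ‖r1.coeff (i:ℕ) - r2.coeff (i:ℕ)‖) * R ^ (m+1)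
          ≤ (δ / R ^ (m+1)) * R ^ (m+1) := by
            apply mul_le_mul_of_nonneg_right h6 (le_of_lt hpow)
        _ = δ := div_mul_cancel₀ δ (ne_of_gt hpow)
    have hPd : P.natDegree ≤ m := by rw [hPdef]; exact polyOf_natDegree_le _
    have hQd : Q.natDegree ≤ m := by rw [hQdef]; exact polyOf_natDegree_le _
    constructor
    · refine hkey (p (φ n)) P (hdp _) (fun i => ?_) hPd
      have : P.coeff (i:ℕ) = (L i).1 := by rw [hPdef]; exact polyOf_coeff _ i
      rw [this]
      have hx1 : (p (φ n)).coeff (i:ℕ) = (x (φ n) i).1 := rfl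
      rw [hx1]
      exact le_add_of_le_of_nonneg (le_refl _) (norm_nonneg _)
    · refine hkey (q (φ n)) Q (hdq _) (fun i => ?_) hQd
      have : Q.coeff (i:ℕ) = (L i).2 := by rw [hQdef]; exact polyOf_coeff _ i
      rw [this]
      have hx1 : (q (φ n)).coeff (i:ℕ) = (x (φ n) i).2 := rfl
      rw [hx1]
      exact le_add_of_nonneg_of_le (norm_nonneg _) (le_refl _)
  -- no common zeros of (P,Q) in D
  have hkeyD : ∀ z₀ ∈ D, ¬(P.eval z₀ = 0 ∧ Q.eval z₀ = 0) := by
    rintro z₀ hz₀D ⟨hP0, hQ0⟩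
    obtain ⟨r, hr, hrD, hloc'⟩ := hloc z₀ hz₀D
    have hzero : ∀ a : OnePoint ℂ, (hpoly a P Q).eval z₀ = 0 := by
      intro a
      rcases a with _ | c
      · exact hQ0
      · show (P - Polynomial.C c * Q).eval z₀ = 0
        rw [Polynomial.eval_sub, Polynomial.eval_mul, Polynomial.eval_C, hP0, hQ0,
          mul_zero, sub_zero]
    have hone : ∀ a b : OnePoint ℂ, a ≠ b → hpoly a P Q = 0 → hpoly b P Q = 0 → False := by
      intro a b hab ha hb
      rcases a with _ | c <;> rcases b with _ | d
      · exact hab rfl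
      · -- Q = 0 and P - dQ = 0
        have hQz : Q = 0 := ha
        have hPz : P = 0 := by
          have : P - Polynomial.C d * Q = 0 := hb
          rw [hQz, mul_zero, sub_zero] at this
          exact this
        exact hPQ0 ⟨hPz, hQz⟩
      · have hQz : Q = 0 := hb
        have hPz : P = 0 := by
          have : P - Polynomial.C c * Q = 0 := ha
          rw [hQz, mul_zero, sub_zero] at this
          exact this
        exact hPQ0 ⟨hPz, hQz⟩
      · have hcd : c ≠ d := fun h => hab (by rw [h])
        have ha' : P - Polynomial.C c * Q = 0 := ha
        have hb' : P - Polynomial.C d * Q = 0 := hb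
        have hsub : Polynomial.C (d - c) * Q = 0 := by
          have := sub_eq_zero.mpr (ha'.trans hb'.symm)
          rw [sub_sub_sub_cancel_left] at this
          rw [← this, Polynomial.C_sub]
          ring
        have hQz : Q = 0 := by
          rcases mul_eq_zero.mp hsub with hC | hQz
          · exact absurd (Polynomial.C_eq_zero.mp hC) (sub_ne_zero.mpr (fun h => hcd h.symm))
          · exact hQz
        have hPz : P = 0 := by
          rw [hQz, mul_zero, sub_zero] at ha'
          exact ha'
        exact hPQ0 ⟨hPz, hQz⟩
    have hattain : ∀ a : OnePoint ℂ, hpoly a P Q ≠ 0 →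
        ∀ᶠ n in atTop, ∃ β ∈ Metric.ball z₀ r, sphVal (f (φ n)) β = a := by
      intro a hane
      have hroots : {z : ℂ | (hpoly a P Q).eval z = 0}.Finite := by
        have := Polynomial.finite_setOf_isRoot hane
        exact this
      obtain ⟨ρ, hρmem, hρnot⟩ :=
        ((Set.Ioo_infinite hr).diff (hroots.image (fun s => dist s z₀))).nonempty
      obtain ⟨hρ0, hρr⟩ := Set.mem_Ioo.mp hρmem
      have hsphne : (Metric.sphere z₀ ρ).Nonempty :=
        NormedSpace.sphere_nonempty.mpr (le_of_lt hρ0)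
      obtain ⟨zs, hzs, hzsmin⟩ := (isCompact_sphere z₀ ρ).exists_isMinOn hsphne
        ((hpoly a P Q).continuous.norm.continuousOn)
      set ε₀ := ‖(hpoly a P Q).eval zs‖ with hε₀def
      have hε₀ : 0 < ε₀ := by
        rw [hε₀def, norm_pos_iff]
        intro h0
        apply hρnot
        exact ⟨zs, h0, mem_sphere.mp hzs⟩
      set R₁ := max 1 (‖z₀‖ + r) with hR₁def
      have h1R : 1 ≤ R₁ := le_max_left _ _
      have h2R : ‖z₀‖ + r ≤ R₁ := le_max_right _ _
      clear_value R₁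
      have hδa : (0:ℝ) < ε₀ / 3 / cfac a := by
        have := cfac_pos a
        positivity
      have hcl : ∀ᶠ n in atTop, ∀ z ∈ Metric.closedBall z₀ ρ,
          ‖(hpoly a (p (φ n)) (q (φ n))).eval z - (hpoly a P Q).eval z‖ ≤ ε₀ / 3 := by
        filter_upwards [huconv R₁ h1R (ε₀ / 3 / cfac a) hδa] with n hb
        intro z hz
        have hzR : ‖z‖ ≤ R₁ := by
          have h1 : dist z z₀ ≤ ρ := mem_closedBall.mp hz
          have h2 : ‖z‖ ≤ ‖z₀‖ + ρ := by
            have := norm_sub_norm_le z z₀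
            rw [← dist_eq_norm] at this
            linarith
          refine le_trans h2 (le_trans ?_ h2R)
          linarith
        obtain ⟨hb1, hb2⟩ := hb z hzR
        have := hpoly_eval_bound a (p (φ n)) (q (φ n)) P Q z _ hb1 hb2
        calc ‖(hpoly a (p (φ n)) (q (φ n))).eval z - (hpoly a P Q).eval z‖
            ≤ cfac a * (ε₀ / 3 / cfac a) := this
          _ = ε₀ / 3 := by
              have hca := (cfac_pos a).ne'
              field_simp
      filter_upwards [hcl] with n hcln
      have hlo : ‖(hpoly a (p (φ n)) (q (φ n))).eval z₀‖ < 2 * ε₀ / 3 := by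
        have h1 := hcln z₀ (mem_closedBall_self (le_of_lt hρ0))
        rw [hzero a, sub_zero] at h1
        linarith
      have hhi : ∀ z ∈ Metric.sphere z₀ ρ, 2 * ε₀ / 3 ≤ ‖(hpoly a (p (φ n)) (q (φ n))).eval z‖ := by
        intro z hz
        have h1 := hcln z (sphere_subset_closedBall hz)
        have h2 : ε₀ ≤ ‖(hpoly a P Q).eval z‖ := hzsmin hz
        have h3 := norm_sub_norm_le ((hpoly a (p (φ n)) (q (φ n))).eval z) ((hpoly a P Q).eval z)
        have h4 := abs_norm_sub_norm_le ((hpoly a (p (φ n)) (q (φ n))).eval z) ((hpoly a P Q).eval z)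
        have h5 := abs_le.mp h4
        linarith [h5.1]
      obtain ⟨β, hβmem, hβ0⟩ := poly_exists_zero hρ0 (by positivity) hlo hhi
      have hβball : β ∈ Metric.ball z₀ r := by
        rw [mem_ball]
        exact lt_of_le_of_lt (mem_closedBall.mp hβmem) hρr
      refine ⟨β, hβball, ?_⟩
      rcases a with _ | c
      · -- a = ∞
        have hqβ : (q (φ n)).eval β = 0 := hβ0
        have hpβ : (p (φ n)).eval β ≠ 0 := fun h0 => hnc (φ n) β ⟨h0, hqβ⟩
        exact sphVal_rat_inf (heq (φ n) β) (hq (φ n)) hqβ hpβ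
      · -- a = c
        have hβ0' : (p (φ n)).eval β - c * (q (φ n)).eval β = 0 := by
          have : (p (φ n) - Polynomial.C c * q (φ n)).eval β = 0 := hβ0
          rwa [Polynomial.eval_sub, Polynomial.eval_mul, Polynomial.eval_C] at this
        have hpc : (p (φ n)).eval β = c * (q (φ n)).eval β := sub_eq_zero.mp hβ0'
        have hqβ : (q (φ n)).eval β ≠ 0 := by
          intro h0
          exact hnc (φ n) β ⟨by rw [hpc, h0, mul_zero], h0⟩
        rw [sphVal_rat_fin (heq (φ n) β) hqβ, hpc, mul_div_cancel_right₀ c hqβ]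
        rfl
    -- combine attainment with omission
    have HU : ∀ᶠ n in atTop,
        (hpoly u P Q ≠ 0 → ∃ β ∈ Metric.ball z₀ r, sphVal (f (φ n)) β = u) := by
      by_cases hc : hpoly u P Q = 0
      · exact Eventually.of_forall (fun n h' => absurd hc h')
      · exact (hattain u hc).mono (fun n hn _ => hn)
    have HV : ∀ᶠ n in atTop,
        (hpoly v P Q ≠ 0 → ∃ β ∈ Metric.ball z₀ r, sphVal (f (φ n)) β = v) := by
      by_cases hc : hpoly v P Q = 0
      · exact Eventually.of_forall (fun n h' => absurd hc h')
      · exact (hattain v hc).mono (fun n hn _ => hn)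
    have HW : ∀ᶠ n in atTop,
        (hpoly w P Q ≠ 0 → ∃ β ∈ Metric.ball z₀ r, sphVal (f (φ n)) β = w) := by
      by_cases hc : hpoly w P Q = 0
      · exact Eventually.of_forall (fun n h' => absurd hc h')
      · exact (hattain w hc).mono (fun n hn _ => hn)
    obtain ⟨N, hNu, hNvw⟩ := (HU.and (HV.and HW)).exists
    obtain ⟨hNv, hNw⟩ := hNvw
    rcases hloc' (f (φ N)) (hfF (φ N)) with ⟨h1, h2⟩ | ⟨h1, h2⟩ | ⟨h1, h2⟩
    · have hor : hpoly u P Q ≠ 0 ∨ hpoly v P Q ≠ 0 := by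
        by_contra hcon
        push_neg at hcon
        exact hone u v huv hcon.1 hcon.2
      rcases hor with hne | hne
      · obtain ⟨β, hβ, hval⟩ := hNu hne
        exact h1 β hβ hval
      · obtain ⟨β, hβ, hval⟩ := hNv hne
        exact h2 β hβ hval
    · have hor : hpoly v P Q ≠ 0 ∨ hpoly w P Q ≠ 0 := by
        by_contra hcon
        push_neg at hcon
        exact hone v w hvw hcon.1 hcon.2
      rcases hor with hne | hne
      · obtain ⟨β, hβ, hval⟩ := hNv hne
        exact h1 β hβ hval
      · obtain ⟨β, hβ, hval⟩ := hNw hne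
        exact h2 β hβ hval
    · have hor : hpoly u P Q ≠ 0 ∨ hpoly w P Q ≠ 0 := by
        by_contra hcon
        push_neg at hcon
        exact hone u w huw hcon.1 hcon.2
      rcases hor with hne | hne
      · obtain ⟨β, hβ, hval⟩ := hNu hne
        exact h1 β hβ hval
      · obtain ⟨β, hβ, hval⟩ := hNw hne
        exact h2 β hβ hval
  -- the limit function
  refine ⟨Gfun P Q, ?_, ?_⟩
  · by_cases hQ0 : Q = 0
    · right
      intro z hz
      rw [Gfun_apply, if_pos (by rw [hQ0, Polynomial.eval_zero])]
    · left
      refine ⟨fun z => P.eval z / Q.eval z, ?_, ?_⟩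
      · intro z hz
        have hPa : AnalyticAt ℂ (fun w => P.eval w) z :=
          (AnalyticOnNhd.eval_polynomial (𝕜 := ℂ) (A := ℂ) P) z (Set.mem_univ z)
        have hQa : AnalyticAt ℂ (fun w => Q.eval w) z :=
          (AnalyticOnNhd.eval_polynomial (𝕜 := ℂ) (A := ℂ) Q) z (Set.mem_univ z)
        exact hPa.meromorphicAt.div hQa.meromorphicAt
      · intro z hz
        rw [Gfun_apply]
        by_cases hqz : Q.eval z = 0
        · rw [if_pos hqz]
          have hpz : P.eval z ≠ 0 := fun h0 => hkeyD z hz ⟨h0, hqz⟩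
          exact (sphVal_rat_inf (Filter.EventuallyEq.rfl) hQ0 hqz hpz).symm
        · rw [if_neg hqz]
          exact (sphVal_rat_fin (Filter.EventuallyEq.rfl) hqz).symm
  · intro K hKD hK ε hε
    rcases K.eq_empty_or_nonempty with hKe | hKne
    · exact Eventually.of_forall (fun n => by simp [hKe])
    · obtain ⟨R₀, hR₀⟩ := hK.isBounded.subset_closedBall 0
      set R₁ := max 1 R₀ with hR₁def
      have h1R : 1 ≤ R₁ := le_max_left _ _
      have h2R : R₀ ≤ R₁ := le_max_right _ _
      clear_value R₁
      have hKR : ∀ z ∈ K, ‖z‖ ≤ R₁ := by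
        intro z hz
        have := hR₀ hz
        rw [mem_closedBall, dist_zero_right] at this
        exact le_trans this h2R
      have hcont : ContinuousOn (fun z => max ‖P.eval z‖ ‖Q.eval z‖) K :=
        ((P.continuous.norm).max (Q.continuous.norm)).continuousOn
      obtain ⟨z₁, hz₁K, hz₁min⟩ := hK.exists_isMinOn hKne hcont
      obtain ⟨z₂, hz₂K, hz₂max⟩ := hK.exists_isMaxOn hKne hcont
      set c := max ‖P.eval z₁‖ ‖Q.eval z₁‖ with hcdef
      set T := max ‖P.eval z₂‖ ‖Q.eval z₂‖ with hTdef
      have hc : 0 < c := by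
        rcases (not_and_or.mp (hkeyD z₁ (hKD hz₁K))) with h0 | h0
        · exact lt_max_of_lt_left (norm_pos_iff.mpr h0)
        · exact lt_max_of_lt_right (norm_pos_iff.mpr h0)
      have hcT : c ≤ T := isMinOn_iff.mp hz₁min z₂ hz₂K
      clear_value c T
      have hT : 0 < T := lt_of_lt_of_le hc hcT
      set s₀ := 2 * Real.sin (min (ε / 2) (Real.pi / 4)) with hs₀def
      have hπ := Real.pi_pos
      have hs₀ : 0 < s₀ := by
        have h1 : 0 < min (ε / 2) (Real.pi / 4) := lt_min (by linarith) (by linarith)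
        have h2 : min (ε / 2) (Real.pi / 4) < Real.pi :=
          lt_of_le_of_lt (min_le_right _ _) (by linarith)
        have := Real.sin_pos_of_pos_of_lt_pi h1 h2
        rw [hs₀def]
        linarith
      set δ := min (c / 2) (s₀ * c ^ 2 / (16 * T)) with hδdef
      have hδ : 0 < δ := lt_min (by positivity) (by positivity)
      have hδc : δ ≤ c / 2 := by rw [hδdef]; exact min_le_left _ _
      have hδ2 : δ ≤ s₀ * c ^ 2 / (16 * T) := by rw [hδdef]; exact min_le_right _ _
      clear_value s₀ δ
      filter_upwards [huconv R₁ h1R δ hδ] with n hb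
      intro z hzK
      obtain ⟨hb1, hb2⟩ := hb z (hKR z hzK)
      have hmaxPQ : c ≤ max ‖P.eval z‖ ‖Q.eval z‖ := by
        rw [hcdef]; exact isMinOn_iff.mp hz₁min z hzK
      have hmaxT1 : ‖P.eval z‖ ≤ T := by
        rw [hTdef]; exact le_trans (le_max_left _ _) (isMaxOn_iff.mp hz₂max z hzK)
      have hmaxT2 : ‖Q.eval z‖ ≤ T := by
        rw [hTdef]; exact le_trans (le_max_right _ _) (isMaxOn_iff.mp hz₂max z hzK)
      have hABne : ¬(P.eval z = 0 ∧ Q.eval z = 0) := hkeyD z (hKD hzK)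
      have hmaxab : c / 2 ≤ max ‖(p (φ n)).eval z‖ ‖(q (φ n)).eval z‖ := by
        have hd1 := abs_le.mp (abs_norm_sub_norm_le ((p (φ n)).eval z) (P.eval z))
        have hd2 := abs_le.mp (abs_norm_sub_norm_le ((q (φ n)).eval z) (Q.eval z))
        rcases le_total ‖P.eval z‖ ‖Q.eval z‖ with hle | hle
        · have hcq : c ≤ ‖Q.eval z‖ := by rw [max_eq_right hle] at hmaxPQ; exact hmaxPQ
          have hq2 : c / 2 ≤ ‖(q (φ n)).eval z‖ := by linarith [hd2.1]
          exact le_trans hq2 (le_max_right _ _)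
        · have hcp : c ≤ ‖P.eval z‖ := by rw [max_eq_left hle] at hmaxPQ; exact hmaxPQ
          have hp2 : c / 2 ≤ ‖(p (φ n)).eval z‖ := by linarith [hd1.1]
          exact le_trans hp2 (le_max_left _ _)
      have habne : ¬((p (φ n)).eval z = 0 ∧ (q (φ n)).eval z = 0) := by
        rintro ⟨h1, h2⟩
        rw [h1, h2, norm_zero, max_self] at hmaxab
        linarith
      have hsph1 : sphVal (f (φ n)) z
          = (if (q (φ n)).eval z = 0 then ∞
             else ((((p (φ n)).eval z / (q (φ n)).eval z : ℂ)) : OnePoint ℂ)) := by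
        by_cases hbz : (q (φ n)).eval z = 0
        · rw [if_pos hbz]
          exact sphVal_rat_inf (heq (φ n) z) (hq (φ n)) hbz (fun h0 => habne ⟨h0, hbz⟩)
        · rw [if_neg hbz]
          exact sphVal_rat_fin (heq (φ n) z) hbz
      rw [hsph1, Gfun_apply]
      apply sph_lt_of_chord_lt hε (chord_nonneg _ _)
      rw [chord_eq _ _ _ _ habne hABne, ← hs₀def]
      have hnum : ‖(p (φ n)).eval z * Q.eval z - (q (φ n)).eval z * P.eval z‖ ≤ 2 * (δ * T) := by
        have e : (p (φ n)).eval z * Q.eval z - (q (φ n)).eval z * P.eval z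
            = ((p (φ n)).eval z - P.eval z) * Q.eval z
              - ((q (φ n)).eval z - Q.eval z) * P.eval z := by ring
        rw [e]
        refine le_trans (norm_sub_le _ _) ?_
        rw [norm_mul, norm_mul]
        have hA1 : ‖(p (φ n)).eval z - P.eval z‖ * ‖Q.eval z‖ ≤ δ * T :=
          mul_le_mul hb1 hmaxT2 (norm_nonneg _) (le_of_lt hδ)
        have hA2 : ‖(q (φ n)).eval z - Q.eval z‖ * ‖P.eval z‖ ≤ δ * T :=
          mul_le_mul hb2 hmaxT1 (norm_nonneg _) (le_of_lt hδ)
        linarith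
      have hden : c ^ 2 / 2 ≤ Real.sqrt ((‖(p (φ n)).eval z‖ ^ 2 + ‖(q (φ n)).eval z‖ ^ 2)
          * (‖P.eval z‖ ^ 2 + ‖Q.eval z‖ ^ 2)) := by
        have h1 : (c / 2) ^ 2 ≤ ‖(p (φ n)).eval z‖ ^ 2 + ‖(q (φ n)).eval z‖ ^ 2 := by
          rcases max_cases ‖(p (φ n)).eval z‖ ‖(q (φ n)).eval z‖ with ⟨hm, _⟩ | ⟨hm, _⟩ <;>
            rw [hm] at hmaxab
          · have := pow_le_pow_left₀ (by linarith : (0:ℝ) ≤ c / 2) hmaxab 2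
            have h0 := sq_nonneg ‖(q (φ n)).eval z‖
            linarith
          · have := pow_le_pow_left₀ (by linarith : (0:ℝ) ≤ c / 2) hmaxab 2
            have h0 := sq_nonneg ‖(p (φ n)).eval z‖
            linarith
        have h2 : c ^ 2 ≤ ‖P.eval z‖ ^ 2 + ‖Q.eval z‖ ^ 2 := by
          rcases max_cases ‖P.eval z‖ ‖Q.eval z‖ with ⟨hm, _⟩ | ⟨hm, _⟩ <;>
            rw [hm] at hmaxPQ
          · have := pow_le_pow_left₀ (le_of_lt hc) hmaxPQ 2
            have h0 := sq_nonneg ‖Q.eval z‖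
            linarith
          · have := pow_le_pow_left₀ (le_of_lt hc) hmaxPQ 2
            have h0 := sq_nonneg ‖P.eval z‖
            linarith
        have h3 : ((c / 2) * c) ^ 2 ≤ (‖(p (φ n)).eval z‖ ^ 2 + ‖(q (φ n)).eval z‖ ^ 2)
            * (‖P.eval z‖ ^ 2 + ‖Q.eval z‖ ^ 2) := by
          rw [mul_pow]
          exact mul_le_mul h1 h2 (by positivity) (by positivity)
        have h4 := Real.sqrt_le_sqrt h3
        rw [Real.sqrt_sq (by positivity)] at h4
        calc c ^ 2 / 2 = (c / 2) * c := by ring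
          _ ≤ _ := h4
      have hspos : (0:ℝ) < c ^ 2 / 2 := by positivity
      have hfrac : 2 * ‖(p (φ n)).eval z * Q.eval z - (q (φ n)).eval z * P.eval z‖
          / Real.sqrt ((‖(p (φ n)).eval z‖ ^ 2 + ‖(q (φ n)).eval z‖ ^ 2)
            * (‖P.eval z‖ ^ 2 + ‖Q.eval z‖ ^ 2))
          ≤ 2 * (2 * (δ * T)) / (c ^ 2 / 2) := by
        apply div_le_div₀ (by positivity) (by linarith) hspos hden
      refine lt_of_le_of_lt hfrac ?_
      rw [div_lt_iff₀ hspos]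
      rw [le_div_iff₀ (by positivity)] at hδ2
      nlinarith [hδ2, hs₀, hT, hc, hδ]
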